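/- arXiv:math/0211205 — 3 statements merged into one kernel-verified Lean document; each statement's English description precedes it below -/
import Mathlib

section
/- For every n ≥ 0, the total number of permutations of [n] avoiding the pattern 132 is the Catalan number Cₙ = C(2n,n)/(n+1). -/
open scoped Classical
open Finset Equiv

set_option maxHeartbeats 1000000

def occ132 {n : ℕ} (π : Equiv.Perm (Fin n)) : ℕ :=
  (Finset.univ.filter (fun t : Fin n × Fin n × Fin n =>
    t.1 < t.2.1 ∧ t.2.1 < t.2.2 ∧ π t.1 < π t.2.2 ∧ π t.2.2 < π t.2.1)).card

def Avoids {n : ℕ} (π : Equiv.Perm (Fin n)) : Prop :=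
  ∀ i j k : Fin n, i < j → j < k → π i < π k → ¬ π k < π j

lemma occ132_eq_zero_iff {n : ℕ} (π : Equiv.Perm (Fin n)) :
    occ132 π = 0 ↔ Avoids π := by
  rw [occ132, Finset.card_eq_zero, Finset.filter_eq_empty_iff]
  constructor
  · intro h i j k hij hjk h1 h2
    exact h (Finset.mem_univ (i, j, k)) ⟨hij, hjk, h1, h2⟩
  · rintro h ⟨i, j, k⟩ - ⟨h1, h2, h3, h4⟩
    exact h i j k h1 h2 h3 h4

def avoidSet (n : ℕ) : Finset (Equiv.Perm (Fin n)) :=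
  Finset.univ.filter (fun π => occ132 π = 0)

variable {n p : ℕ}

def buildFun (n p : ℕ) (hp : p ≤ n) (σ : Equiv.Perm (Fin p)) (τ : Equiv.Perm (Fin (n - p))) :
    Fin (n + 1) → Fin (n + 1) := fun i =>
  if h : (i : ℕ) < p then ⟨n - p + (σ ⟨i, h⟩ : ℕ), by have := (σ ⟨i, h⟩).isLt; omega⟩
  else if h2 : (i : ℕ) = p then ⟨n, by omega⟩
  else ⟨(τ ⟨(i : ℕ) - p - 1, by have := i.isLt; omega⟩ : ℕ), by
    have := (τ ⟨(i : ℕ) - p - 1, by have := i.isLt; omega⟩).isLt; omega⟩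

lemma bf_lt (hp : p ≤ n) (σ : Equiv.Perm (Fin p)) (τ : Equiv.Perm (Fin (n - p)))
    {i : Fin (n + 1)} (h : (i : ℕ) < p) :
    (buildFun n p hp σ τ i : ℕ) = n - p + (σ ⟨i, h⟩ : ℕ) := by
  simp only [buildFun, dif_pos h]

lemma bf_eq (hp : p ≤ n) (σ : Equiv.Perm (Fin p)) (τ : Equiv.Perm (Fin (n - p)))
    {i : Fin (n + 1)} (h : (i : ℕ) = p) : (buildFun n p hp σ τ i : ℕ) = n := by
  simp only [buildFun, dif_neg (by omega : ¬ (i : ℕ) < p), dif_pos h]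

lemma bf_gt (hp : p ≤ n) (σ : Equiv.Perm (Fin p)) (τ : Equiv.Perm (Fin (n - p)))
    {i : Fin (n + 1)} (h : p < (i : ℕ)) :
    (buildFun n p hp σ τ i : ℕ) =
      (τ ⟨(i : ℕ) - p - 1, by have := i.isLt; omega⟩ : ℕ) := by
  simp only [buildFun, dif_neg (by omega : ¬ (i : ℕ) < p), dif_neg (by omega : ¬ (i : ℕ) = p)]

lemma bf_lt_bound (hp : p ≤ n) (σ : Equiv.Perm (Fin p)) (τ : Equiv.Perm (Fin (n - p)))
    {i : Fin (n + 1)} (h : (i : ℕ) < p) :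
    n - p ≤ (buildFun n p hp σ τ i : ℕ) ∧ (buildFun n p hp σ τ i : ℕ) < n := by
  rw [bf_lt hp σ τ h]; have := (σ ⟨i, h⟩).isLt; omega

lemma bf_gt_bound (hp : p ≤ n) (σ : Equiv.Perm (Fin p)) (τ : Equiv.Perm (Fin (n - p)))
    {i : Fin (n + 1)} (h : p < (i : ℕ)) :
    (buildFun n p hp σ τ i : ℕ) < n - p := by
  rw [bf_gt hp σ τ h]; exact (τ _).isLt

lemma buildFun_inj (hp : p ≤ n) (σ : Equiv.Perm (Fin p)) (τ : Equiv.Perm (Fin (n - p))) :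
    Function.Injective (buildFun n p hp σ τ) := by
  intro a b hab
  replace hab := congrArg Fin.val hab
  rcases lt_trichotomy (a : ℕ) p with ha | ha | ha <;>
    rcases lt_trichotomy (b : ℕ) p with hb | hb | hb
  · rw [bf_lt hp σ τ ha, bf_lt hp σ τ hb] at hab
    have hv : ((σ ⟨a, ha⟩ : Fin p) : ℕ) = ((σ ⟨b, hb⟩ : Fin p) : ℕ) := by omega
    have h4 := σ.injective (Fin.ext hv)
    have := congrArg Fin.val h4
    simp only at this
    exact Fin.ext this
  · have h1 := bf_lt_bound hp σ τ ha
    rw [bf_eq hp σ τ hb] at hab; omega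
  · have h1 := bf_lt_bound hp σ τ ha
    have h2 := bf_gt_bound hp σ τ hb
    omega
  · have h1 := bf_lt_bound hp σ τ hb
    rw [bf_eq hp σ τ ha] at hab; omega
  · exact Fin.ext (ha.trans hb.symm)
  · have h2 := bf_gt_bound hp σ τ hb
    rw [bf_eq hp σ τ ha] at hab; omega
  · have h1 := bf_lt_bound hp σ τ hb
    have h2 := bf_gt_bound hp σ τ ha
    omega
  · have h2 := bf_gt_bound hp σ τ ha
    rw [bf_eq hp σ τ hb] at hab; omega
  · rw [bf_gt hp σ τ ha, bf_gt hp σ τ hb] at hab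
    have h3 := τ.injective (Fin.ext hab)
    have := congrArg Fin.val h3
    simp only at this
    exact Fin.ext (by omega)

noncomputable def buildPerm (n p : ℕ) (hp : p ≤ n) (σ : Equiv.Perm (Fin p))
    (τ : Equiv.Perm (Fin (n - p))) : Equiv.Perm (Fin (n + 1)) :=
  Equiv.ofBijective _ (Finite.injective_iff_bijective.mp (buildFun_inj hp σ τ))

lemma buildPerm_apply (hp : p ≤ n) (σ : Equiv.Perm (Fin p)) (τ : Equiv.Perm (Fin (n - p)))
    (i : Fin (n + 1)) : buildPerm n p hp σ τ i = buildFun n p hp σ τ i := rfl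

lemma buildPerm_avoids (hp : p ≤ n) {σ : Equiv.Perm (Fin p)} {τ : Equiv.Perm (Fin (n - p))}
    (hσ : Avoids σ) (hτ : Avoids τ) : Avoids (buildPerm n p hp σ τ) := by
  intro i j k hij hjk h1 h2
  simp only [buildPerm_apply] at h1 h2
  rw [Fin.lt_def] at hij hjk h1 h2
  rcases lt_trichotomy (i : ℕ) p with hi | hi | hi
  · rcases lt_trichotomy (k : ℕ) p with hk | hk | hk
    · have hj : (j : ℕ) < p := by omega
      have e1 := bf_lt hp σ τ hi
      have e2 := bf_lt hp σ τ hj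
      have e3 := bf_lt hp σ τ hk
      exact hσ ⟨i, hi⟩ ⟨j, hj⟩ ⟨k, hk⟩ (Fin.mk_lt_mk.mpr hij) (Fin.mk_lt_mk.mpr hjk)
        (Fin.lt_def.mpr (by omega)) (Fin.lt_def.mpr (by omega))
    · have e3 := bf_eq hp σ τ hk
      have := (buildFun n p hp σ τ j).isLt
      have e2 : (buildFun n p hp σ τ j : ℕ) ≤ n := by omega
      omega
    · have h3 := bf_gt_bound hp σ τ hk
      have h4 := (bf_lt_bound hp σ τ hi).1
      omega
  · have e1 := bf_eq hp σ τ hi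
    have := (buildFun n p hp σ τ k).isLt
    omega
  · have hj : p < (j : ℕ) := by omega
    have hk : p < (k : ℕ) := by omega
    have e1 := bf_gt hp σ τ hi
    have e2 := bf_gt hp σ τ hj
    have e3 := bf_gt hp σ τ hk
    exact hτ ⟨(i : ℕ) - p - 1, by have := i.isLt; omega⟩
      ⟨(j : ℕ) - p - 1, by have := j.isLt; omega⟩
      ⟨(k : ℕ) - p - 1, by have := k.isLt; omega⟩
      (Fin.mk_lt_mk.mpr (by omega)) (Fin.mk_lt_mk.mpr (by omega))
      (Fin.lt_def.mpr (by omega)) (Fin.lt_def.mpr (by omega))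

section Decomp

variable {n : ℕ} (π : Equiv.Perm (Fin (n + 1)))

def top (n : ℕ) : Fin (n + 1) := ⟨n, Nat.lt_succ_self n⟩

lemma cross (hA : Avoids π) {i k : Fin (n + 1)} (hi : (i : ℕ) < ((π.symm (top n)) : ℕ))
    (hk : ((π.symm (top n)) : ℕ) < (k : ℕ)) : (π k : ℕ) < (π i : ℕ) := by
  have hnei : π i ≠ top n := by
    intro h
    have : i = π.symm (top n) := by rw [← h]; simp
    omega
  have hnek : π k ≠ top n := by
    intro h
    have : k = π.symm (top n) := by rw [← h]; simp
    omega
  have hine : π i ≠ π k := fun h => by have := π.injective h; omega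
  by_contra hcon
  push_neg at hcon
  have h1 : (π i : ℕ) < (π k : ℕ) := by
    rcases lt_or_eq_of_le hcon with h | h
    · exact h
    · exact absurd (Fin.ext h) hine
  have h2 : (π k : ℕ) < n := by
    have := (π k).isLt
    have : (π k : ℕ) ≠ n := fun h => hnek (Fin.ext h)
    omega
  exact hA i (π.symm (top n)) k (Fin.lt_def.mpr hi) (Fin.lt_def.mpr hk)
    (Fin.lt_def.mpr h1) (Fin.lt_def.mpr (by simp [top]; omega))

lemma bound_lt (hA : Avoids π) {i : Fin (n + 1)} (hi : (i : ℕ) < ((π.symm (top n)) : ℕ)) :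
    n - ((π.symm (top n)) : ℕ) ≤ (π i : ℕ) := by
  set p := ((π.symm (top n)) : ℕ) with hp
  have hsub : Finset.image π (Finset.Ioi (π.symm (top n))) ⊆ Finset.Iio (π i) := by
    intro v hv
    rcases Finset.mem_image.mp hv with ⟨k, hk, rfl⟩
    rw [Finset.mem_Iio]
    exact Fin.lt_def.mpr (cross π hA hi (Fin.lt_def.mp (Finset.mem_Ioi.mp hk)))
  have h1 := Finset.card_le_card hsub
  rw [Finset.card_image_of_injective _ π.injective, Fin.card_Ioi, Fin.card_Iio] at h1
  omega

lemma bound_gt (hA : Avoids π) {k : Fin (n + 1)} (hk : ((π.symm (top n)) : ℕ) < (k : ℕ)) :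
    (π k : ℕ) < n - ((π.symm (top n)) : ℕ) := by
  set p := ((π.symm (top n)) : ℕ) with hp
  have hsub : Finset.image π (Finset.Iic (π.symm (top n))) ⊆ Finset.Ioi (π k) := by
    intro v hv
    rcases Finset.mem_image.mp hv with ⟨i, hi, rfl⟩
    rw [Finset.mem_Ioi]
    rcases lt_or_eq_of_le (Finset.mem_Iic.mp hi) with h | h
    · exact Fin.lt_def.mpr (cross π hA (Fin.lt_def.mp h) hk)
    · rw [h, Equiv.apply_symm_apply]
      refine Fin.lt_def.mpr ?_
      have h2 : (π k : ℕ) ≠ n := by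
        intro h3
        have : k = π.symm (top n) := by
          rw [← Equiv.symm_apply_apply π k]; congr 1; exact Fin.ext h3
        omega
      have := (π k).isLt
      simp only [top]
      omega
  have h1 := Finset.card_le_card hsub
  rw [Finset.card_image_of_injective _ π.injective, Fin.card_Ioi, Fin.card_Iic] at h1
  have := (π k).isLt
  omega

end Decomp

lemma fiber_card (n p : ℕ) (hp : p ≤ n) :
    ((avoidSet (n + 1)).filter
      (fun π : Equiv.Perm (Fin (n + 1)) => ((π.symm (top n)) : ℕ) = p)).card =
    (avoidSet p).card * (avoidSet (n - p)).card := by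
  rw [← Finset.card_product]
  apply (Finset.card_bij (fun st _ => buildPerm n p hp st.1 st.2) ?_ ?_ ?_).symm
  · rintro ⟨σ, τ⟩ hst
    rw [Finset.mem_product] at hst
    obtain ⟨h1, h2⟩ := hst
    rw [avoidSet, Finset.mem_filter] at h1 h2
    rw [Finset.mem_filter]
    refine ⟨?_, ?_⟩
    · rw [avoidSet, Finset.mem_filter]
      exact ⟨Finset.mem_univ _, (occ132_eq_zero_iff _).mpr
        (buildPerm_avoids hp ((occ132_eq_zero_iff _).mp h1.2) ((occ132_eq_zero_iff _).mp h2.2))⟩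
    · have hb : buildPerm n p hp σ τ ⟨p, by omega⟩ = top n := by
        apply Fin.ext
        exact bf_eq hp σ τ rfl
      have hs : (buildPerm n p hp σ τ).symm (top n) = ⟨p, by omega⟩ := by
        rw [← hb, Equiv.symm_apply_apply]
      rw [hs]
  · rintro ⟨σ, τ⟩ h1 ⟨σ', τ'⟩ h2 heq
    have hfun : ∀ i, buildFun n p hp σ τ i = buildFun n p hp σ' τ' i := fun i =>
      DFunLike.congr_fun heq i
    have hσ : σ = σ' := by
      apply Equiv.ext
      intro x
      have hx : (x : ℕ) < p := x.isLt
      have h := hfun ⟨(x : ℕ), by omega⟩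
      have hv := congrArg Fin.val h
      rw [bf_lt hp σ τ hx, bf_lt hp σ' τ' hx] at hv
      simp only [Fin.eta] at hv
      exact Fin.ext (by omega)
    have hτ : τ = τ' := by
      apply Equiv.ext
      intro x
      have hx : (x : ℕ) < n - p := x.isLt
      have h := hfun ⟨p + 1 + (x : ℕ), by omega⟩
      have hv := congrArg Fin.val h
      rw [bf_gt hp σ τ (by exact (by omega : p < p + 1 + (x : ℕ))),
        bf_gt hp σ' τ' (by exact (by omega : p < p + 1 + (x : ℕ)))] at hv
      have pf : p + 1 + (x : ℕ) - p - 1 < n - p := by omega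
      have hive : (⟨p + 1 + (x : ℕ) - p - 1, pf⟩ : Fin (n - p)) = x := Fin.ext (by
        show p + 1 + (x : ℕ) - p - 1 = (x : ℕ); omega)
      have h9 := congrArg (fun z => ((τ z : Fin (n - p)) : ℕ)) hive
      have h9' := congrArg (fun z => ((τ' z : Fin (n - p)) : ℕ)) hive
      exact Fin.ext ((h9.symm.trans hv).trans h9')
    rw [Prod.mk.injEq]
    exact ⟨hσ, hτ⟩
  · intro π hπ
    rw [Finset.mem_filter] at hπ
    obtain ⟨hπ1, hπ2⟩ := hπ
    rw [avoidSet, Finset.mem_filter] at hπ1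
    have hA : Avoids π := (occ132_eq_zero_iff _).mp hπ1.2
    have hptop : π ⟨p, by omega⟩ = top n := by
      have h : π.symm (top n) = ⟨p, by omega⟩ := Fin.ext hπ2
      rw [← h, Equiv.apply_symm_apply]
    have hne : ∀ i : Fin (n + 1), (i : ℕ) ≠ p → (π i : ℕ) < n := by
      intro i hi
      have h1 : π i ≠ top n := by
        intro h
        have h2 : i = π.symm (top n) := by rw [← h]; simp
        omega
      have h3 := (π i).isLt
      have h4 : (π i : ℕ) ≠ n := fun h => h1 (Fin.ext h)
      omega
    have hlow : ∀ i : Fin (n + 1), (i : ℕ) < p → n - p ≤ (π i : ℕ) := by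
      intro i hi
      have := bound_lt π hA (i := i) (by omega)
      omega
    have hhigh : ∀ k : Fin (n + 1), p < (k : ℕ) → (π k : ℕ) < n - p := by
      intro k hk
      have := bound_gt π hA (k := k) (by omega)
      omega
    let σf : Fin p → Fin p := fun x =>
      ⟨(π ⟨(x : ℕ), by have := x.isLt; omega⟩ : ℕ) - (n - p), by
        have hx := x.isLt
        have h5 := hne ⟨(x : ℕ), by omega⟩ (by exact Nat.ne_of_lt hx)
        omega⟩
    let τf : Fin (n - p) → Fin (n - p) := fun x =>
      ⟨(π ⟨p + 1 + (x : ℕ), by have := x.isLt; omega⟩ : ℕ), by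
        exact hhigh _ (by exact (by omega : p < p + 1 + (x : ℕ)))⟩
    have hσinj : Function.Injective σf := by
      intro x y hxy
      have hx' : (x : ℕ) < n + 1 := by have := x.isLt; omega
      have hy' : (y : ℕ) < n + 1 := by have := y.isLt; omega
      have hvx := hlow ⟨(x : ℕ), hx'⟩ x.isLt
      have hvy := hlow ⟨(y : ℕ), hy'⟩ y.isLt
      have hv : (π ⟨(x : ℕ), hx'⟩ : ℕ) - (n - p) = (π ⟨(y : ℕ), hy'⟩ : ℕ) - (n - p) :=
        congrArg Fin.val hxy
      have heqv : π ⟨(x : ℕ), hx'⟩ = π ⟨(y : ℕ), hy'⟩ := Fin.ext (by omega)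
      have h6 := π.injective heqv
      have h7 := congrArg Fin.val h6
      exact Fin.ext (show (x : ℕ) = (y : ℕ) from h7)
    have hτinj : Function.Injective τf := by
      intro x y hxy
      have hx' : p + 1 + (x : ℕ) < n + 1 := by have := x.isLt; omega
      have hy' : p + 1 + (y : ℕ) < n + 1 := by have := y.isLt; omega
      have hv0 := congrArg Fin.val hxy
      have hv : (π ⟨p + 1 + (x : ℕ), hx'⟩ : ℕ) = (π ⟨p + 1 + (y : ℕ), hy'⟩ : ℕ) := hv0
      have h6 := π.injective (Fin.ext hv)
      have h7 : p + 1 + (x : ℕ) = p + 1 + (y : ℕ) := congrArg Fin.val h6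
      exact Fin.ext (by omega)
    refine ⟨⟨Equiv.ofBijective σf (Finite.injective_iff_bijective.mp hσinj),
             Equiv.ofBijective τf (Finite.injective_iff_bijective.mp hτinj)⟩, ?_, ?_⟩
    · rw [Finset.mem_product]
      constructor
      · rw [avoidSet, Finset.mem_filter]
        refine ⟨Finset.mem_univ _, (occ132_eq_zero_iff _).mpr ?_⟩
        intro a b c hab hbc hv1 hv2
        have ha' : (a : ℕ) < n + 1 := by have := a.isLt; omega
        have hb' : (b : ℕ) < n + 1 := by have := b.isLt; omega
        have hc' : (c : ℕ) < n + 1 := by have := c.isLt; omega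
        have hva := hlow ⟨(a : ℕ), ha'⟩ a.isLt
        have hvb := hlow ⟨(b : ℕ), hb'⟩ b.isLt
        have hvc := hlow ⟨(c : ℕ), hc'⟩ c.isLt
        have h1' : (π ⟨(a : ℕ), ha'⟩ : ℕ) - (n - p) < (π ⟨(c : ℕ), hc'⟩ : ℕ) - (n - p) :=
          Fin.lt_def.mp hv1
        have h2' : (π ⟨(c : ℕ), hc'⟩ : ℕ) - (n - p) < (π ⟨(b : ℕ), hb'⟩ : ℕ) - (n - p) :=
          Fin.lt_def.mp hv2
        exact hA ⟨(a : ℕ), ha'⟩ ⟨(b : ℕ), hb'⟩ ⟨(c : ℕ), hc'⟩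
          (Fin.lt_def.mpr (Fin.lt_def.mp hab)) (Fin.lt_def.mpr (Fin.lt_def.mp hbc))
          (Fin.lt_def.mpr (by omega)) (Fin.lt_def.mpr (by omega))
      · rw [avoidSet, Finset.mem_filter]
        refine ⟨Finset.mem_univ _, (occ132_eq_zero_iff _).mpr ?_⟩
        intro a b c hab hbc hv1 hv2
        have ha' : p + 1 + (a : ℕ) < n + 1 := by have := a.isLt; omega
        have hb' : p + 1 + (b : ℕ) < n + 1 := by have := b.isLt; omega
        have hc' : p + 1 + (c : ℕ) < n + 1 := by have := c.isLt; omega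
        have h1' : (π ⟨p + 1 + (a : ℕ), ha'⟩ : ℕ) < (π ⟨p + 1 + (c : ℕ), hc'⟩ : ℕ) :=
          Fin.lt_def.mp hv1
        have h2' : (π ⟨p + 1 + (c : ℕ), hc'⟩ : ℕ) < (π ⟨p + 1 + (b : ℕ), hb'⟩ : ℕ) :=
          Fin.lt_def.mp hv2
        exact hA ⟨p + 1 + (a : ℕ), ha'⟩ ⟨p + 1 + (b : ℕ), hb'⟩ ⟨p + 1 + (c : ℕ), hc'⟩
          (Fin.lt_def.mpr (show p + 1 + (a : ℕ) < p + 1 + (b : ℕ) by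
            have := Fin.lt_def.mp hab; omega))
          (Fin.lt_def.mpr (show p + 1 + (b : ℕ) < p + 1 + (c : ℕ) by
            have := Fin.lt_def.mp hbc; omega))
          (Fin.lt_def.mpr h1') (Fin.lt_def.mpr h2')
    · apply Equiv.ext
      intro i
      apply Fin.ext
      rw [buildPerm_apply]
      rcases lt_trichotomy (i : ℕ) p with hi | hi | hi
      · rw [bf_lt hp _ _ hi]
        have hl := hlow i hi
        show n - p + ((π ⟨(i : ℕ), by have := i.isLt; omega⟩ : ℕ) - (n - p)) = (π i : ℕ)
        simp only [Fin.eta]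
        omega
      · rw [bf_eq hp _ _ hi]
        rw [show i = (⟨p, by omega⟩ : Fin (n + 1)) from Fin.ext hi]
        exact (congrArg Fin.val hptop).symm
      · rw [bf_gt hp _ _ hi]
        have hpf : p + 1 + ((i : ℕ) - p - 1) < n + 1 := by have := i.isLt; omega
        have hmk : (⟨p + 1 + ((i : ℕ) - p - 1), hpf⟩ : Fin (n + 1)) = i :=
          Fin.ext (by show p + 1 + ((i : ℕ) - p - 1) = (i : ℕ); omega)
        show (π ⟨p + 1 + ((i : ℕ) - p - 1), hpf⟩ : ℕ) = (π i : ℕ)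
        rw [hmk]

lemma card_succ (n : ℕ) : (avoidSet (n + 1)).card =
    ∑ p ∈ Finset.range (n + 1), (avoidSet p).card * (avoidSet (n - p)).card := by
  rw [Finset.card_eq_sum_card_fiberwise
    (f := fun π : Equiv.Perm (Fin (n + 1)) => ((π.symm (top n)) : ℕ))
    (t := Finset.range (n + 1)) (fun π _ => Finset.mem_range.mpr (Fin.isLt _))]
  refine Finset.sum_congr rfl fun p hpm => ?_
  exact fiber_card n p (by have := Finset.mem_range.mp hpm; omega)

lemma card_zero : (avoidSet 0).card = 1 := by
  have h : ∀ π : Equiv.Perm (Fin 0), occ132 π = 0 := by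
    intro π
    simp [occ132, Finset.univ_eq_empty]
  rw [avoidSet, Finset.filter_true_of_mem (fun π _ => h π), Finset.card_univ]
  simp

lemma avoid_card_eq_catalan : ∀ n, (avoidSet n).card = catalan n := by
  intro n
  induction n using Nat.strong_induction_on with
  | _ n ih =>
    match n with
    | 0 => simpa using card_zero
    | m + 1 =>
      rw [card_succ, catalan_succ, Fin.sum_univ_eq_sum_range (fun i => catalan i * catalan (m - i)) (m + 1)]
      refine Finset.sum_congr rfl fun p hpm => ?_
      have hpm' := Finset.mem_range.mp hpm
      rw [ih p (by omega), ih (m - p) (by omega)]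

/-- For every `n ≥ 0`, the number of permutations of `[n]` avoiding `132` is
the Catalan number `Cₙ`. -/
theorem card_avoiding_132_eq_catalan (n : ℕ) :
    (Finset.univ.filter (fun π : Equiv.Perm (Fin n) => occ132 π = 0)).card = catalan n :=
  avoid_card_eq_catalan n
end

section
/- If a permutation π of [n] contains exactly r occurrences of the pattern 132, then the connected component of the pattern-incidence bipartite graph of π containing the entry n involves at most 2r+1 entries of π. -/
/-- Two entries (given by their positions `a`, `b`) are adjacent in the
pattern-incidence bipartite graph `G_π` iff some occurrence of 132 contains both. -/
def Adj132 {n : ℕ} (π : Equiv.Perm (Fin n)) (a b : Fin n) : Prop :=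
  ∃ i j k : Fin n, i < j ∧ j < k ∧ π i < π k ∧ π k < π j ∧
    (a = i ∨ a = j ∨ a = k) ∧ (b = i ∨ b = j ∨ b = k)

/-- The kernel of `π`: the set of entries (positions) lying in the connected
component of the entry `n` (the maximal value, located at position `π⁻¹(n)`) in the
bipartite graph `G_π` of entries versus occurrences of 132. -/
def kernel132 {n : ℕ} (π : Equiv.Perm (Fin (n + 1))) : Set (Fin (n + 1)) :=
  {b | Relation.ReflTransGen (Adj132 π) (π.symm (Fin.last n)) b}

theorem Finset.card_filter_exists_lt_le_card_sub_one {α β : Type*} [LinearOrder β]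
    (s : Finset α) (f : α → β) :
    (s.filter fun b => ∃ c ∈ s, f c < f b).card ≤ s.card - 1 := by
  rcases s.eq_empty_or_nonempty with rfl | hs
  · simp
  obtain ⟨m, hm, hmin⟩ := s.exists_min_image f hs
  have : (s.filter fun b => ∃ c ∈ s, f c < f b).card < s.card :=
    Finset.card_lt_card <| Finset.filter_ssubset.2
      ⟨m, hm, fun ⟨c, hc, hlt⟩ => (hmin c hc).not_gt hlt⟩
  omega

namespace SimpleGraph

variable {V : Type*} {G : SimpleGraph V}

theorem Reachable.exists_adj_dist_lt {u v : V} (h : G.Reachable u v) (hne : u ≠ v) :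
    ∃ w, G.Adj v w ∧ G.dist u w < G.dist u v := by
  obtain ⟨p, hp⟩ := h.symm.exists_walk_length_eq_dist
  cases p with
  | nil => exact absurd rfl hne
  | @cons _ w _ hadj q =>
    refine ⟨w, hadj, ?_⟩
    have hq : G.dist w u ≤ q.length := dist_le q
    rw [Walk.length_cons, dist_comm] at hp
    rw [dist_comm]
    omega

theorem ncard_reachable_le [DecidableEq V] {ι : Type*} (E : Finset ι) (edge : ι → Finset V)
    (k : ℕ) (hcard : ∀ t ∈ E, (edge t).card ≤ k + 1)
    (hcover : ∀ a b, G.Adj a b → ∃ t ∈ E, a ∈ edge t ∧ b ∈ edge t) (u : V) :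
    {v | G.Reachable u v}.ncard ≤ k * E.card + 1 := by
  set nonMin : ι → Finset V :=
    fun t => (edge t).filter fun b => ∃ c ∈ edge t, G.dist u c < G.dist u b
  have hsub : {v | G.Reachable u v} ⊆ ↑(insert u (E.biUnion nonMin)) := by
    intro v hv
    rcases eq_or_ne u v with rfl | hne
    · exact Finset.mem_insert_self _ _
    obtain ⟨w, hadj, hlt⟩ := hv.exists_adj_dist_lt hne
    obtain ⟨t, ht, hv, hw⟩ := hcover v w hadj
    exact Finset.mem_insert_of_mem <| Finset.mem_biUnion.2
      ⟨t, ht, Finset.mem_filter.2 ⟨hv, w, hw, hlt⟩⟩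
  have hnonMin : ∀ t ∈ E, (nonMin t).card ≤ k := fun t ht =>
    ((edge t).card_filter_exists_lt_le_card_sub_one _).trans (by have := hcard t ht; omega)
  calc {v | G.Reachable u v}.ncard
      ≤ (insert u (E.biUnion nonMin)).card :=
        (Set.ncard_le_ncard hsub).trans (Set.ncard_coe_finset _).le
    _ ≤ (E.biUnion nonMin).card + 1 := Finset.card_insert_le _ _
    _ ≤ k * E.card + 1 := by
        have := E.card_biUnion_le_card_mul nonMin k hnonMin
        rw [mul_comm]
        omega

end SimpleGraph

def occurrences132 {n : ℕ} (π : Equiv.Perm (Fin n)) : Finset (Fin n × Fin n × Fin n) :=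
  Finset.univ.filter fun t =>
    t.1 < t.2.1 ∧ t.2.1 < t.2.2 ∧ π t.1 < π t.2.2 ∧ π t.2.2 < π t.2.1

theorem occ132_eq_card_occurrences132 {n : ℕ} (π : Equiv.Perm (Fin n)) :
    occ132 π = (occurrences132 π).card :=
  rfl

theorem Adj132.exists_mem_occurrences132 {n : ℕ} {π : Equiv.Perm (Fin n)} {a b : Fin n}
    (h : Adj132 π a b) : ∃ t ∈ occurrences132 π,
      a ∈ ({t.1, t.2.1, t.2.2} : Finset _) ∧ b ∈ ({t.1, t.2.1, t.2.2} : Finset _) := by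
  obtain ⟨i, j, k, hij, hjk, hik, hkj, ha, hb⟩ := h
  exact ⟨(i, j, k), by simp [occurrences132, hij, hjk, hik, hkj], by simpa using ha,
    by simpa using hb⟩

instance Adj132.instSymm {n : ℕ} (π : Equiv.Perm (Fin n)) : Std.Symm (Adj132 π) :=
  ⟨fun _ _ ⟨i, j, k, hij, hjk, hik, hkj, ha, hb⟩ =>
    ⟨i, j, k, hij, hjk, hik, hkj, hb, ha⟩⟩

/-- If a permutation `π` of `[n]` contains exactly `r` occurrences of the
pattern 132, then its kernel (the connected component of the entry `n` in the
pattern-incidence bipartite graph) has size at most `2r+1`. -/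
theorem kernel132_card_le {n r : ℕ} (π : Equiv.Perm (Fin (n + 1)))
    (hπ : occ132 π = r) : (kernel132 π).ncard ≤ 2 * r + 1 := by
  let G := SimpleGraph.fromEdgeSet (Sym2.fromRel (Adj132.instSymm π))
  have hkernel : kernel132 π = {b | G.Reachable (π.symm (Fin.last n)) b} := by
    simp only [kernel132, G, SimpleGraph.reachable_fromEdgeSet_fromRel_eq_reflTransGen]
  have hcover (a b : Fin (n + 1)) (hab : G.Adj a b) :=
    ((SimpleGraph.fromEdgeSet_adj _).1 hab).1.exists_mem_occurrences132
  rw [hkernel, ← hπ, occ132_eq_card_occurrences132]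
  exact SimpleGraph.ncard_reachable_le _ _ 2 (fun t _ => Finset.card_le_three) hcover _
end

section
/- For the exceptional kernel shape ρ = 2r−1, 2r+1, 2r−3, 2r, …, 1, 4, 2 in S_{2r+1} (r ≥ 1), the number of occurrences of the pattern 132 in ρ equals exactly r. -/
/-- The exceptional kernel shape `ρ = 2r−1, 2r+1, 2r−3, 2r, …, 1, 4, 2 ∈ S_{2r+1}`,
written 0-indexed (position `q` holds value `excShape r q`, both shifted down by 1):
position `2r` holds `1`, other even positions `q = 2j` hold `2r−2−q`, position `1`
holds `2r`, and other odd positions hold `2r−q+2`. -/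
def excShape (r q : ℕ) : ℕ :=
  if q = 2 * r then 1
  else if q % 2 = 0 then 2 * r - 2 - q
  else if q = 1 then 2 * r
  else 2 * r - q + 2

lemma excShape_key {r i j k : ℕ} (hr : 1 ≤ r) (hij : i < j) (hjk : j < k)
    (hk : k < 2 * r + 1)
    (h1 : excShape r i < excShape r k) (h2 : excShape r k < excShape r j) :
    i % 2 = 0 ∧ j = i + 1 ∧ k = min (i + 3) (2 * r) ∧ i / 2 < r := by
  unfold excShape at h1 h2
  split_ifs at h1 h2 <;> omega

lemma excShape_occ {r m : ℕ} (hr : 1 ≤ r) (hm : m < r) :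
    excShape r (2 * m) < excShape r (min (2 * m + 3) (2 * r)) ∧
    excShape r (min (2 * m + 3) (2 * r)) < excShape r (2 * m + 1) := by
  unfold excShape
  split_ifs <;> omega

/-- For `r ≥ 1`, the exceptional kernel shape
`ρ = 2r−1, 2r+1, 2r−3, 2r, …, 1, 4, 2 ∈ S_{2r+1}` contains exactly `r`
occurrences of the pattern 132. -/
theorem occ132_excShape {r : ℕ} (hr : 1 ≤ r) (ρ : Equiv.Perm (Fin (2 * r + 1)))
    (hρ : ∀ q : Fin (2 * r + 1), (ρ q : ℕ) = excShape r (q : ℕ)) :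
    occ132 ρ = r := by
  rw [occ132]; conv_rhs => rw [← Finset.card_range r]
  apply Finset.card_bij' (i := fun (t : Fin (2*r+1) × Fin (2*r+1) × Fin (2*r+1)) _ => (t.1 : ℕ) / 2)
    (j := fun (m : ℕ) (hm : m ∈ Finset.range r) =>
      ((⟨2 * m, by simp only [Finset.mem_range] at hm; omega⟩ : Fin (2*r+1)),
       (⟨2 * m + 1, by simp only [Finset.mem_range] at hm; omega⟩ : Fin (2*r+1)),
       (⟨min (2 * m + 3) (2 * r), by omega⟩ : Fin (2*r+1))))
  case hj =>
    intro m hm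
    simp only [Finset.mem_range] at hm
    have := excShape_occ hr hm
    simp only [Finset.mem_filter, Finset.mem_univ, true_and, Fin.lt_def]
    refine ⟨by omega, by omega, ?_, ?_⟩ <;> rw [hρ, hρ] <;>
      simp only [Fin.val_mk] <;> omega
  case hi =>
    intro t ht
    simp only [Finset.mem_filter, Finset.mem_univ, true_and, Fin.lt_def] at ht
    obtain ⟨h12, h23, hv1, hv2⟩ := ht
    rw [hρ, hρ] at hv1 hv2
    have := excShape_key hr h12 h23 t.2.2.isLt hv1 hv2
    simp only [Finset.mem_range]
    omega
  case left_inv =>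
    intro t ht
    simp only [Finset.mem_filter, Finset.mem_univ, true_and, Fin.lt_def] at ht
    obtain ⟨h12, h23, hv1, hv2⟩ := ht
    rw [hρ, hρ] at hv1 hv2
    obtain ⟨he, hj, hk, hlt⟩ := excShape_key hr h12 h23 t.2.2.isLt hv1 hv2
    obtain ⟨t1, t2, t3⟩ := t
    simp only [Prod.mk.injEq, Fin.ext_iff, Fin.val_mk] at *
    refine ⟨by omega, by omega, by omega⟩
  case right_inv =>
    intro m hm
    simp only [Finset.mem_range] at hm
    simp only [Fin.val_mk]
    omega
end
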